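/- Let (L, (h_1, …, h_m)) be a forward self-similar system such that L_x is connected for every infinite word x ∈ {1, …, m}^ℕ. Let P be the set of all sequences (B_k)_{k≥1} such that each B_k is a connected component of Γ_k and, for every k, the truncation map w ↦ w|k maps every vertex of B_{k+1} to a vertex of B_k (i.e., P is the inverse limit of the sets of connected components of the graphs Γ_k). Then there is a bijection Φ from P onto the set of connected components of L; namely, given (B_k)_{k≥1} ∈ P, there exists x ∈ {1, …, m}^ℕ with x|k ∈ B_k for every k, and Φ((B_k)_k) is the connected component of L containing L_x, which does not depend on the choice of such x. -/

import Mathlib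

open Set
set_option linter.unusedSectionVars false

/-- `h_{w̄}(L)` for a finite word `w = (w₁, …, w_k)`, encoded as the list `[w₁, …, w_k]`,
namely `h_{w₁}(h_{w₂}(⋯ h_{w_k}(L) ⋯))`, where `L` is the whole space. -/
def fwdIm {L : Type*} {m : ℕ} (h : Fin m → L → L) : List (Fin m) → Set L
  | [] => Set.univ
  | a :: w => h a '' fwdIm h w

/-- The truncation `x|k` of an infinite word `x`. -/
def wordTrunc {m : ℕ} (x : ℕ → Fin m) (k : ℕ) : List (Fin m) :=
  List.ofFn fun i : Fin k => x i.val

/-- `L_x = ⋂_{j ≥ 1} h_{x₁}(h_{x₂}(⋯ h_{x_j}(L) ⋯))`. -/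
def fwdLimSet {L : Type*} {m : ℕ} (h : Fin m → L → L) (x : ℕ → Fin m) : Set L :=
  ⋂ j : ℕ, fwdIm h (wordTrunc x (j + 1))

/-- The graph `Γ_k`: vertices are the words of length `k`, and two distinct words `w, w'`
are adjacent iff `h_{w̄}(L) ∩ h_{w̄'}(L) ≠ ∅`. -/
def fwdGraph {L : Type*} {m : ℕ} (h : Fin m → L → L) (k : ℕ) :
    SimpleGraph (Fin k → Fin m) where
  Adj w w' := w ≠ w' ∧ (fwdIm h (List.ofFn w) ∩ fwdIm h (List.ofFn w')).Nonempty
  symm := by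
    constructor
    intro w w' hw
    obtain ⟨hne, hx⟩ := hw
    exact ⟨hne.symm, by rwa [Set.inter_comm] at hx⟩
  loopless := by
    constructor
    intro w hw
    exact hw.1 rfl

/-- The inverse limit `P` of the sets of connected components of the graphs `Γ_k`:
sequences `(B_k)_{k ≥ 1}` of connected components that are compatible under the
truncation maps `w ↦ w|k`. (Here `B k` is a component of `Γ_{k+1}`.) -/
def fwdCompSeq {L : Type*} {m : ℕ} (h : Fin m → L → L) : Type _ :=
  {B : (k : ℕ) → (fwdGraph h (k + 1)).ConnectedComponent //
    ∀ (k : ℕ) (w : Fin (k + 2) → Fin m),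
      (fwdGraph h (k + 2)).connectedComponentMk w = B (k + 1) →
      (fwdGraph h (k + 1)).connectedComponentMk (fun i => w i.castSucc) = B k}

section Aux

variable {L : Type*} [MetricSpace L] [CompactSpace L] [Nonempty L] {m : ℕ} {h : Fin m → L → L}

lemma fwdIm_append_subset (l l' : List (Fin m)) : fwdIm h (l ++ l') ⊆ fwdIm h l := by
  induction l with
  | nil => simp [fwdIm]
  | cons a l ih =>
    simp only [List.cons_append, fwdIm]
    exact Set.image_mono ih

lemma isCompact_fwdIm (hcont : ∀ j, Continuous (h j)) (l : List (Fin m)) :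
    IsCompact (fwdIm h l) := by
  induction l with
  | nil => exact isCompact_univ
  | cons a l ih => exact ih.image (hcont a)

lemma isClosed_fwdIm (hcont : ∀ j, Continuous (h j)) (l : List (Fin m)) :
    IsClosed (fwdIm h l) := (isCompact_fwdIm hcont l).isClosed

lemma fwdIm_nonempty (l : List (Fin m)) : (fwdIm h l).Nonempty := by
  induction l with
  | nil => exact Set.univ_nonempty
  | cons a l ih => exact ih.image _

lemma fwdIm_trunc {k : ℕ} (w : Fin (k + 1) → Fin m) :
    fwdIm h (List.ofFn w) ⊆ fwdIm h (List.ofFn fun i : Fin k => w i.castSucc) := by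
  rw [List.ofFn_succ' w, List.concat_eq_append]
  exact fwdIm_append_subset _ _

lemma wordTrunc_eq (x : ℕ → Fin m) (k : ℕ) :
    wordTrunc x k = List.ofFn (fun i : Fin k => x i.val) := rfl

/-- König-type lemma: an inverse limit of nonempty sets of words, closed under
truncation, has an infinite word through it. -/
lemma koenig_words (hm : 1 ≤ m) (S : (k : ℕ) → Set (Fin (k + 1) → Fin m))
    (hne : ∀ k, (S k).Nonempty)
    (htr : ∀ (k : ℕ) (w : Fin (k + 2) → Fin m), w ∈ S (k + 1) →
      (fun i : Fin (k + 1) => w i.castSucc) ∈ S k) :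
    ∃ x : ℕ → Fin m, ∀ k, (fun i : Fin (k + 1) => x i.val) ∈ S k := by
  have : Nonempty (Fin m) := ⟨⟨0, hm⟩⟩
  set C : ℕ → Set (ℕ → Fin m) := fun k => {x | (fun i : Fin (k + 1) => x i.val) ∈ S k} with hC
  have hsub : ∀ k, C (k + 1) ⊆ C k := by
    intro k x hx
    have h2 := htr k (fun j : Fin (k + 2) => x j.val) hx
    have he : (fun i : Fin (k + 1) => (fun j : Fin (k + 2) => x j.val) i.castSucc)
        = fun i : Fin (k + 1) => x i.val := by
      funext i; simp
    rwa [he] at h2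
  have hCne : ∀ k, (C k).Nonempty := by
    intro k
    obtain ⟨w, hw⟩ := hne k
    refine ⟨fun n => if hn : n < k + 1 then w ⟨n, hn⟩ else ⟨0, hm⟩, ?_⟩
    have he : (fun i : Fin (k + 1) =>
        (fun n => if hn : n < k + 1 then w ⟨n, hn⟩ else (⟨0, hm⟩ : Fin m)) i.val) = w := by
      funext i
      simp [i.isLt]
    show _ ∈ S k
    rwa [he]
  have hCcl : ∀ k, IsClosed (C k) := by
    intro k
    have hc : Continuous (fun x : ℕ → Fin m => (fun i : Fin (k + 1) => x i.val)) :=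
      continuous_pi fun i => continuous_apply _
    exact (isClosed_discrete (S k)).preimage hc
  obtain ⟨x, hx⟩ := IsCompact.nonempty_iInter_of_sequence_nonempty_isCompact_isClosed
    C hsub hCne ((hCcl 0).isCompact) hCcl
  exact ⟨x, fun k => Set.mem_iInter.1 hx k⟩

lemma fwdLimSet_inter_nonempty (hcont : ∀ j, Continuous (h j)) (x : ℕ → Fin m)
    (W : Set L) (hW : IsClosed W)
    (hmeet : ∀ j, (fwdIm h (wordTrunc x (j + 1)) ∩ W).Nonempty) :
    (fwdLimSet h x ∩ W).Nonempty := by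
  have hnest : ∀ j : ℕ, fwdIm h (wordTrunc x (j + 2)) ⊆ fwdIm h (wordTrunc x (j + 1)) := by
    intro j
    have := fwdIm_trunc (h := h) (fun i : Fin (j + 2) => x i.val)
    rw [wordTrunc_eq, wordTrunc_eq]
    refine this.trans ?_
    have he : (fun i : Fin (j + 1) => (fun i : Fin (j + 2) => x i.val) i.castSucc)
        = fun i : Fin (j + 1) => x i.val := by funext i; simp
    rw [he]
  have key := IsCompact.nonempty_iInter_of_sequence_nonempty_isCompact_isClosed
    (fun j => fwdIm h (wordTrunc x (j + 1)) ∩ W)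
    (fun j => Set.inter_subset_inter_left _ (hnest j)) hmeet
    ((isCompact_fwdIm hcont _).inter_right hW)
    (fun j => (isClosed_fwdIm hcont _).inter hW)
  have heq : (⋂ j, fwdIm h (wordTrunc x (j + 1)) ∩ W) = fwdLimSet h x ∩ W := by
    ext p
    simp [fwdLimSet, forall_and]
  rw [← heq]
  exact key

/-- Truncation respects adjacency (up to equality), hence reachability. -/
lemma reachable_trunc {k : ℕ} {w w' : Fin (k + 2) → Fin m}
    (hr : (fwdGraph h (k + 2)).Reachable w w') :
    (fwdGraph h (k + 1)).Reachable (fun i => w i.castSucc) (fun i => w' i.castSucc) := by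
  obtain ⟨p⟩ := hr
  induction p with
  | nil => exact SimpleGraph.Reachable.refl _
  | @cons a b c ha p ih =>
    refine SimpleGraph.Reachable.trans ?_ ih
    obtain ⟨-, y, hy1, hy2⟩ := ha
    by_cases hEq : (fun i : Fin (k + 1) => a i.castSucc) = (fun i : Fin (k + 1) => b i.castSucc)
    · rw [hEq]
    · exact SimpleGraph.Adj.reachable
        ⟨hEq, ⟨y, fwdIm_trunc _ hy1, fwdIm_trunc _ hy2⟩⟩

/-- The words of length `k` cover `L`. -/
lemma fwdIm_cover (hcover : (⋃ j, Set.range (h j)) = Set.univ) :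
    ∀ (k : ℕ) (y : L), ∃ w : Fin k → Fin m, y ∈ fwdIm h (List.ofFn w) := by
  intro k
  induction k with
  | zero => exact fun y => ⟨Fin.elim0, by simp [fwdIm]⟩
  | succ k ih =>
    intro y
    have hy : y ∈ ⋃ j, Set.range (h j) := by rw [hcover]; trivial
    obtain ⟨j, z, rfl⟩ := by simpa using hy
    obtain ⟨w, hw⟩ := ih z
    refine ⟨Fin.cons j w, ?_⟩
    rw [List.ofFn_succ]
    simp only [Fin.cons_zero, Fin.cons_succ]
    exact ⟨z, hw, rfl⟩

/-- Nerve lemma: two words whose pieces meet a preconnected set are reachable in `Γ`. -/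
lemma nerve (hcont : ∀ j, Continuous (h j)) (hcover : (⋃ j, Set.range (h j)) = Set.univ)
    {C : Set L} (hC : IsPreconnected C) (k : ℕ) {w w' : Fin (k + 1) → Fin m}
    (hw : (fwdIm h (List.ofFn w) ∩ C).Nonempty)
    (hw' : (fwdIm h (List.ofFn w') ∩ C).Nonempty) :
    (fwdGraph h (k + 1)).Reachable w w' := by
  classical
  by_contra hre
  set A : Set L := ⋃ u ∈ {u : Fin (k + 1) → Fin m | (fwdGraph h (k + 1)).Reachable w u},
    fwdIm h (List.ofFn u) with hA
  set A' : Set L := ⋃ u ∈ {u : Fin (k + 1) → Fin m | ¬ (fwdGraph h (k + 1)).Reachable w u},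
    fwdIm h (List.ofFn u) with hA'
  have hAcl : IsClosed A :=
    (Set.toFinite _).isClosed_biUnion (fun u _ => isClosed_fwdIm hcont _)
  have hA'cl : IsClosed A' :=
    (Set.toFinite _).isClosed_biUnion (fun u _ => isClosed_fwdIm hcont _)
  have hdisj : ∀ y, y ∈ A → y ∈ A' → False := by
    intro y hyA hyA'
    simp only [hA, hA', Set.mem_iUnion] at hyA hyA'
    obtain ⟨u, hu, hyu⟩ := hyA
    obtain ⟨u', hu', hyu'⟩ := hyA'
    have hne : u ≠ u' := fun he => hu' (he ▸ hu)
    exact hu' (hu.trans (SimpleGraph.Adj.reachable ⟨hne, ⟨y, hyu, hyu'⟩⟩))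
  have hcovAA' : ∀ y : L, y ∈ A ∪ A' := by
    intro y
    obtain ⟨u, hu⟩ := fwdIm_cover hcover (k + 1) y
    by_cases hru : (fwdGraph h (k + 1)).Reachable w u
    · exact Or.inl (Set.mem_biUnion hru hu)
    · exact Or.inr (Set.mem_biUnion hru hu)
  have hsub : C ⊆ A'ᶜ ∪ Aᶜ := by
    intro y _
    rcases hcovAA' y with hy | hy
    · exact Or.inl (fun hy' => hdisj y hy hy')
    · exact Or.inr (fun hy' => hdisj y hy' hy)
  obtain ⟨p, hpw, hpC⟩ := hw
  obtain ⟨p', hpw', hpC'⟩ := hw'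
  have hpA : p ∈ A := Set.mem_biUnion (SimpleGraph.Reachable.refl w) hpw
  have hp'A' : p' ∈ A' := Set.mem_biUnion hre hpw'
  have h1 : (C ∩ A'ᶜ).Nonempty := ⟨p, hpC, fun hp' => hdisj p hpA hp'⟩
  have h2 : (C ∩ Aᶜ).Nonempty := ⟨p', hpC', fun hp => hdisj p' hp hp'A'⟩
  obtain ⟨q, hqC, hq1, hq2⟩ := hC A'ᶜ Aᶜ hA'cl.isOpen_compl hAcl.isOpen_compl hsub h1 h2
  rcases hcovAA' q with hq | hq
  · exact hq2 hq
  · exact hq1 hq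

/-- For a clopen set `V`, at some level every piece is inside `V` or inside `Vᶜ`. -/
lemma exists_level_clopen (hm : 1 ≤ m) (hcont : ∀ j, Continuous (h j))
    (hconn : ∀ x : ℕ → Fin m, IsConnected (fwdLimSet h x))
    {V : Set L} (hV : IsClopen V) :
    ∃ N : ℕ, ∀ w : Fin (N + 1) → Fin m,
      fwdIm h (List.ofFn w) ⊆ V ∨ fwdIm h (List.ofFn w) ⊆ Vᶜ := by
  by_contra hc
  push_neg at hc
  obtain ⟨x, hx⟩ := koenig_words hm
    (fun k => {u : Fin (k + 1) → Fin m |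
      (fwdIm h (List.ofFn u) ∩ V).Nonempty ∧ (fwdIm h (List.ofFn u) ∩ Vᶜ).Nonempty})
    (by
      intro k
      obtain ⟨u, hu1, hu2⟩ := hc k
      refine ⟨u, ?_, ?_⟩
      · obtain ⟨a, ha, hav⟩ := Set.not_subset.1 hu2
        exact ⟨a, ha, not_not.1 hav⟩
      · obtain ⟨a, ha, hav⟩ := Set.not_subset.1 hu1
        exact ⟨a, ha, hav⟩)
    (by
      rintro k u ⟨h1, h2⟩
      exact ⟨h1.mono (Set.inter_subset_inter_left _ (fwdIm_trunc u)),
        h2.mono (Set.inter_subset_inter_left _ (fwdIm_trunc u))⟩)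
  have h1 : (fwdLimSet h x ∩ V).Nonempty :=
    fwdLimSet_inter_nonempty hcont x V hV.isClosed (fun j => ((hx j).1))
  have h2 : (fwdLimSet h x ∩ Vᶜ).Nonempty :=
    fwdLimSet_inter_nonempty hcont x Vᶜ hV.compl.isClosed (fun j => ((hx j).2))
  rcases (hconn x).isPreconnected.subset_or_subset hV.isOpen hV.compl.isOpen
      disjoint_compl_right (by rw [Set.union_compl_self]; exact Set.subset_univ _) with hs | hs
  · obtain ⟨q, hq1, hq2⟩ := h2
    exact hq2 (hs hq1)
  · obtain ⟨q, hq1, hq2⟩ := h1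
    exact (hs hq1) hq2

/-- Spreading a side of a clopen dichotomy along reachability. -/
lemma reach_side {N : ℕ} {V : Set L}
    (hdich : ∀ u : Fin (N + 1) → Fin m,
      fwdIm h (List.ofFn u) ⊆ V ∨ fwdIm h (List.ofFn u) ⊆ Vᶜ)
    {w w' : Fin (N + 1) → Fin m} (hr : (fwdGraph h (N + 1)).Reachable w w') :
    fwdIm h (List.ofFn w) ⊆ V → fwdIm h (List.ofFn w') ⊆ V := by
  obtain ⟨p⟩ := hr
  induction p with
  | nil => exact id
  | @cons a b c ha _ ih =>
    intro hw
    apply ih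
    rcases hdich b with hb | hb
    · exact hb
    · obtain ⟨-, y, hy1, hy2⟩ := ha
      exact absurd (hw hy1) (hb hy2)

end Aux

/-- For a forward self-similar system with all `L_x` connected, the map `Φ` sending a
compatible sequence of graph components `(B_k)` to the connected component of `L`
containing `L_x` (for any `x` with `x|k ∈ B_k` for all `k`) is well defined and a
bijection from the inverse limit onto the set of connected components of `L`. -/
theorem forward_components_bijection
    {L : Type*} [MetricSpace L] [CompactSpace L] [Nonempty L]
    {m : ℕ} (hm : 1 ≤ m)
    (h : Fin m → L → L) (hcont : ∀ j, Continuous (h j))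
    (hcover : (⋃ j, Set.range (h j)) = Set.univ)
    (hconn : ∀ x : ℕ → Fin m, IsConnected (fwdLimSet h x)) :
    (∀ B : fwdCompSeq h, ∃ x : ℕ → Fin m, ∀ k : ℕ,
        (fwdGraph h (k + 1)).connectedComponentMk (fun i : Fin (k + 1) => x i.val) = B.1 k) ∧
    ∃ Φ : fwdCompSeq h ≃ {C : Set L // ∃ y : L, C = connectedComponent y},
      ∀ (B : fwdCompSeq h) (x : ℕ → Fin m),
        (∀ k : ℕ, (fwdGraph h (k + 1)).connectedComponentMk
            (fun i : Fin (k + 1) => x i.val) = B.1 k) →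
        fwdLimSet h x ⊆ (Φ B).1 := by
  classical
  -- Part 1: every compatible sequence of components contains an infinite word.
  have part1 : ∀ B : fwdCompSeq h, ∃ x : ℕ → Fin m, ∀ k : ℕ,
      (fwdGraph h (k + 1)).connectedComponentMk (fun i : Fin (k + 1) => x i.val) = B.1 k := by
    intro B
    refine koenig_words hm
      (fun k => {u : Fin (k + 1) → Fin m | (fwdGraph h (k + 1)).connectedComponentMk u = B.1 k})
      (fun k => ?_) B.2
    obtain ⟨u, hu⟩ := Quot.exists_rep (B.1 k)
    exact ⟨u, hu⟩
  -- well-definedness of the component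
  have key : ∀ (B : fwdCompSeq h) (x x' : ℕ → Fin m),
      (∀ k : ℕ, (fwdGraph h (k + 1)).connectedComponentMk
        (fun i : Fin (k + 1) => x i.val) = B.1 k) →
      (∀ k : ℕ, (fwdGraph h (k + 1)).connectedComponentMk
        (fun i : Fin (k + 1) => x' i.val) = B.1 k) →
      ∀ y ∈ fwdLimSet h x, ∀ z ∈ fwdLimSet h x',
      connectedComponent y = connectedComponent z := by
    intro B x x' hx hx' y hy z hz
    by_contra hne
    have hz' : z ∉ connectedComponent y := by
      intro hzc
      exact hne (connectedComponent_eq hzc)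
    rw [connectedComponent_eq_iInter_isClopen] at hz'
    simp only [Set.mem_iInter, not_forall] at hz'
    obtain ⟨⟨V, hVclopen, hyV⟩, hzV⟩ := hz'
    obtain ⟨N, hdich⟩ := exists_level_clopen hm hcont hconn hVclopen
    have hyN : y ∈ fwdIm h (List.ofFn (fun i : Fin (N + 1) => x i.val)) :=
      Set.mem_iInter.1 hy N
    have hzN : z ∈ fwdIm h (List.ofFn (fun i : Fin (N + 1) => x' i.val)) :=
      Set.mem_iInter.1 hz N
    have hxV : fwdIm h (List.ofFn (fun i : Fin (N + 1) => x i.val)) ⊆ V := by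
      rcases hdich (fun i : Fin (N + 1) => x i.val) with hs | hs
      · exact hs
      · exact absurd hyV (hs hyN)
    have hr : (fwdGraph h (N + 1)).Reachable
        (fun i : Fin (N + 1) => x i.val) (fun i : Fin (N + 1) => x' i.val) :=
      SimpleGraph.ConnectedComponent.exact ((hx N).trans (hx' N).symm)
    exact hzV (reach_side hdich hr hxV hzN)
  have part1' := part1
  choose xB hxB using part1'
  have hLne : ∀ x : ℕ → Fin m, (fwdLimSet h x).Nonempty := fun x => (hconn x).nonempty
  choose yB hyB using fun B => hLne (xB B)
  set f : fwdCompSeq h → {C : Set L // ∃ y : L, C = connectedComponent y} :=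
    fun B => ⟨connectedComponent (yB B), yB B, rfl⟩ with hf
  have hf_comp : ∀ (B : fwdCompSeq h) (x : ℕ → Fin m),
      (∀ k : ℕ, (fwdGraph h (k + 1)).connectedComponentMk
        (fun i : Fin (k + 1) => x i.val) = B.1 k) →
      ∀ z ∈ fwdLimSet h x, connectedComponent z = connectedComponent (yB B) :=
    fun B x hx z hz => key B x (xB B) hx (hxB B) z hz (yB B) (hyB B)
  have hinj : Function.Injective f := by
    intro B B' hBB'
    have hCeq : connectedComponent (yB B) = connectedComponent (yB B') :=
      congrArg Subtype.val hBB'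
    refine Subtype.ext (funext fun k => ?_)
    rw [← hxB B k, ← hxB B' k]
    apply SimpleGraph.ConnectedComponent.sound
    refine nerve hcont hcover (isPreconnected_connectedComponent (x := yB B)) k ?_ ?_
    · exact ⟨yB B, Set.mem_iInter.1 (hyB B) k, mem_connectedComponent⟩
    · refine ⟨yB B', Set.mem_iInter.1 (hyB B') k, ?_⟩
      rw [hCeq]
      exact mem_connectedComponent
  have hsurj : Function.Surjective f := by
    rintro ⟨C, y, rfl⟩
    obtain ⟨x, hx⟩ := koenig_words hm
      (fun k => {u : Fin (k + 1) → Fin m | y ∈ fwdIm h (List.ofFn u)})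
      (fun k => (fwdIm_cover hcover (k + 1) y).imp fun u hu => hu)
      (fun k u hu => fwdIm_trunc u hu)
    have hyLx : y ∈ fwdLimSet h x := Set.mem_iInter.2 fun j => hx j
    refine ⟨⟨fun k => (fwdGraph h (k + 1)).connectedComponentMk
        (fun i : Fin (k + 1) => x i.val), ?_⟩, ?_⟩
    · intro k w hwk
      apply SimpleGraph.ConnectedComponent.sound
      have hr := SimpleGraph.ConnectedComponent.exact hwk
      have h2 := reachable_trunc (h := h) hr
      have he : (fun i : Fin (k + 1) =>
          (fun j : Fin (k + 2) => x j.val) i.castSucc) = fun i : Fin (k + 1) => x i.val := by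
        funext i; simp
      rwa [he] at h2
    · refine Subtype.ext ?_
      exact (hf_comp ⟨fun k => (fwdGraph h (k + 1)).connectedComponentMk
        (fun i : Fin (k + 1) => x i.val), fun k w hwk => by
          apply SimpleGraph.ConnectedComponent.sound
          have hr := SimpleGraph.ConnectedComponent.exact hwk
          have h2 := reachable_trunc (h := h) hr
          have he : (fun i : Fin (k + 1) =>
              (fun j : Fin (k + 2) => x j.val) i.castSucc) = fun i : Fin (k + 1) => x i.val := by
            funext i; simp
          rwa [he] at h2⟩ x (fun k => rfl) y hyLx).symm
  refine ⟨part1, Equiv.ofBijective f ⟨hinj, hsurj⟩, ?_⟩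
  intro B x hx z hz
  have hcomp := hf_comp B x hx z hz
  show z ∈ (f B).1
  have hfB : (f B).1 = connectedComponent (yB B) := rfl
  rw [hfB, ← hcomp]
  exact mem_connectedComponent
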